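/- arXiv:1911.00065 — 3 statements merged into one kernel-verified Lean document; each statement's English description precedes it below -/
import Mathlib

section
/- Let 0 ≤ β < d, ε > 0 and f ∈ L¹(ℝ^d). Define the truncated fractional maximal function M_β^ε f(x) = sup_{r ≥ ε} r^β (1/|B(x,r)|) ∫_{B(x,r)} |f|. Then for all x, y ∈ ℝ^d, |M_β^ε f(x) − M_β^ε f(y)| ≤ ((d−β)/ε) |x−y| (M_β^ε f(x) + M_β^ε f(y)) ≤ (2(d−β)/(ω_d ε^{d+1−β})) ‖f‖_{L¹} |x−y|, where ω_d is the volume of the d-dimensional unit ball. In particular, M_β^ε f is Lipschitz continuous. -/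
open MeasureTheory Metric Filter
open scoped RealInnerProductSpace ENNReal NNReal Topology

noncomputable section

abbrev Ed (d : ℕ) := EuclideanSpace ℝ (Fin d)

/-- The centered fractional maximal function. -/
noncomputable def cMax (d : ℕ) (β : ℝ) (f : Ed d → ℝ) (x : Ed d) : ℝ :=
  ⨆ r : Set.Ioi (0:ℝ), (r : ℝ) ^ β * ⨍ y in ball x (r : ℝ), |f y|

/-- `g` is the weak gradient of `f` on `ℝ^d`. -/
def HasWeakGradient {d : ℕ} (f : Ed d → ℝ) (g : Ed d → Ed d) : Prop :=
  ∀ φ : Ed d → ℝ, ContDiff ℝ (⊤ : ℕ∞) φ → HasCompactSupport φ →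
    ∫ y, f y • gradient φ y = - ∫ y, φ y • g y

/-- The truncated centered fractional maximal function. -/
noncomputable def tMax (d : ℕ) (β ε : ℝ) (f : Ed d → ℝ) (x : Ed d) : ℝ :=
  ⨆ r : Set.Ici ε, (r : ℝ) ^ β * ⨍ y in ball x (r : ℝ), |f y|

section Aux

variable {d : ℕ} {β ε : ℝ} {f : Ed d → ℝ}

lemma omega_pos : 0 < (volume (ball (0 : Ed d) 1)).toReal :=
  ENNReal.toReal_pos (measure_ball_pos volume 0 one_pos).ne' measure_ball_lt_top.ne

lemma term_eq (hd : 0 < d) (x : Ed d) {r : ℝ} (hr : 0 < r) :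
    (r : ℝ) ^ β * ⨍ y in ball x r, |f y| =
      r ^ (β - (d : ℝ)) * ((volume (ball (0 : Ed d) 1)).toReal)⁻¹ *
        ∫ y in ball x r, |f y| := by
  haveI : Nontrivial (Ed d) := Module.nontrivial_of_finrank_pos (R := ℝ)
    (by rw [finrank_euclideanSpace_fin]; exact hd)
  rw [setAverage_eq, measureReal_def, Measure.addHaar_ball volume x hr.le, finrank_euclideanSpace_fin,
    ENNReal.toReal_mul, ENNReal.toReal_ofReal (by positivity), smul_eq_mul]
  have h1 : (r : ℝ) ^ (d : ℕ) = r ^ (d : ℝ) := (Real.rpow_natCast r d).symm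
  rw [h1, Real.rpow_sub hr, mul_inv]
  have h2 : (r : ℝ) ^ (d : ℝ) ≠ 0 := by positivity
  field_simp

lemma term_le (hd : 0 < d) (hβd : β < d) (hε : 0 < ε) (hf : Integrable f)
    (x : Ed d) {r : ℝ} (hr : ε ≤ r) :
    (r : ℝ) ^ β * ⨍ y in ball x r, |f y| ≤
      ε ^ (β - (d : ℝ)) * ((volume (ball (0 : Ed d) 1)).toReal)⁻¹ * ∫ z, |f z| := by
  rw [term_eq hd x (hε.trans_le hr)]
  have h1 : (r : ℝ) ^ (β - (d : ℝ)) ≤ ε ^ (β - (d : ℝ)) :=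
    Real.rpow_le_rpow_of_nonpos hε hr (by linarith)
  have h2 : ∫ y in ball x r, |f y| ≤ ∫ z, |f z| :=
    setIntegral_le_integral hf.abs (Filter.Eventually.of_forall fun z => abs_nonneg _)
  have h3 : (0:ℝ) ≤ ∫ y in ball x r, |f y| :=
    setIntegral_nonneg measurableSet_ball fun z _ => abs_nonneg _
  have h4 : (0:ℝ) ≤ ((volume (ball (0 : Ed d) 1)).toReal)⁻¹ := by positivity
  calc (r:ℝ) ^ (β - (d:ℝ)) * ((volume (ball (0 : Ed d) 1)).toReal)⁻¹ * ∫ y in ball x r, |f y|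
      ≤ ε ^ (β - (d:ℝ)) * ((volume (ball (0 : Ed d) 1)).toReal)⁻¹ * ∫ y in ball x r, |f y| := by
        apply mul_le_mul_of_nonneg_right (mul_le_mul_of_nonneg_right h1 h4) h3
    _ ≤ _ := by
        apply mul_le_mul_of_nonneg_left h2 (by positivity)

lemma tMax_bdd (hd : 0 < d) (hβd : β < d) (hε : 0 < ε) (hf : Integrable f) (x : Ed d) :
    BddAbove (Set.range fun r : Set.Ici ε => (r : ℝ) ^ β * ⨍ y in ball x (r:ℝ), |f y|) := by
  refine ⟨ε ^ (β - (d : ℝ)) * ((volume (ball (0 : Ed d) 1)).toReal)⁻¹ * ∫ z, |f z|, ?_⟩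
  rintro _ ⟨⟨r, hr⟩, rfl⟩
  exact term_le hd hβd hε hf x hr

lemma tMax_le (hd : 0 < d) (hβd : β < d) (hε : 0 < ε) (hf : Integrable f) (x : Ed d) :
    tMax d β ε f x ≤
      ε ^ (β - (d : ℝ)) * ((volume (ball (0 : Ed d) 1)).toReal)⁻¹ * ∫ z, |f z| := by
  haveI : Nonempty (Set.Ici ε) := ⟨⟨ε, Set.self_mem_Ici⟩⟩
  exact ciSup_le fun ⟨r, hr⟩ => term_le hd hβd hε hf x hr

lemma tMax_nonneg (hd : 0 < d) (hβd : β < d) (hε : 0 < ε) (hf : Integrable f) (x : Ed d) :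
    0 ≤ tMax d β ε f x := by
  have h0 : (0:ℝ) ≤ (ε : ℝ) ^ β * ⨍ y in ball x ε, |f y| := by
    rw [term_eq hd x hε]
    have h3 : (0:ℝ) ≤ ∫ y in ball x ε, |f y| :=
      setIntegral_nonneg measurableSet_ball fun z _ => abs_nonneg _
    positivity
  exact h0.trans (le_ciSup (tMax_bdd hd hβd hε hf x) ⟨ε, Set.self_mem_Ici⟩)

lemma tMax_key (hd : 0 < d) (hβd : β < d) (hε : 0 < ε) (hf : Integrable f) (x y : Ed d) :
    tMax d β ε f x ≤ (1 + dist x y / ε) ^ ((d : ℝ) - β) * tMax d β ε f y := by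
  haveI : Nonempty (Set.Ici ε) := ⟨⟨ε, Set.self_mem_Ici⟩⟩
  apply ciSup_le
  rintro ⟨r, (hr : ε ≤ r)⟩
  set t := dist x y with ht
  have ht0 : 0 ≤ t := dist_nonneg
  have hr0 : 0 < r := hε.trans_le hr
  have hrt0 : 0 < r + t := by linarith
  have hsub : ball x r ⊆ ball y (r + t) :=
    ball_subset_ball' (by rw [← ht])
  have hmono : ∫ z in ball x r, |f z| ≤ ∫ z in ball y (r + t), |f z| :=
    setIntegral_mono_set hf.abs.integrableOn
      (Filter.Eventually.of_forall fun z => abs_nonneg _)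
      (HasSubset.Subset.eventuallyLE hsub)
  have hIy : (0:ℝ) ≤ ∫ z in ball y (r + t), |f z| :=
    setIntegral_nonneg measurableSet_ball fun z _ => abs_nonneg _
  have hfac : ((r + t) / r) ^ ((d:ℝ) - β) * (r + t) ^ (β - (d:ℝ)) = r ^ (β - (d:ℝ)) := by
    have e1 : ((r + t):ℝ) ^ ((d:ℝ) - β) * (r + t) ^ (β - (d:ℝ)) = 1 := by
      rw [← Real.rpow_add hrt0]; norm_num
    have e2 : (r:ℝ) ^ ((d:ℝ) - β) * r ^ (β - (d:ℝ)) = 1 := by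
      rw [← Real.rpow_add hr0]; norm_num
    have h2 : (r:ℝ) ^ ((d:ℝ) - β) ≠ 0 := by positivity
    rw [Real.div_rpow hrt0.le hr0.le]
    field_simp
    linarith [e1, e2]
  have hterm : (r : ℝ) ^ β * ⨍ z in ball x r, |f z| ≤
      ((r + t) / r) ^ ((d:ℝ) - β) * ((r + t) ^ β * ⨍ z in ball y (r+t), |f z|) := by
    rw [term_eq hd x hr0, term_eq hd y hrt0]
    calc r ^ (β - (d:ℝ)) * ((volume (ball (0 : Ed d) 1)).toReal)⁻¹ * ∫ z in ball x r, |f z|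
        ≤ r ^ (β - (d:ℝ)) * ((volume (ball (0 : Ed d) 1)).toReal)⁻¹ *
            ∫ z in ball y (r + t), |f z| := by
          apply mul_le_mul_of_nonneg_left hmono (by positivity)
      _ = _ := by rw [← hfac]; ring
  have hterm2 : (r + t) ^ β * ⨍ z in ball y (r+t), |f z| ≤ tMax d β ε f y :=
    le_ciSup (tMax_bdd hd hβd hε hf y) ⟨r + t, by simp only [Set.mem_Ici]; linarith⟩
  have htn : (0:ℝ) ≤ (r + t) ^ β * ⨍ z in ball y (r+t), |f z| := by
    rw [term_eq hd y hrt0]; positivity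
  have hq : (r + t) / r ≤ 1 + t / ε := by
    rw [add_div, div_self hr0.ne']
    have : t / r ≤ t / ε := div_le_div_of_nonneg_left ht0 hε hr
    linarith
  have hq2 : ((r + t) / r) ^ ((d:ℝ) - β) ≤ (1 + t / ε) ^ ((d:ℝ) - β) :=
    Real.rpow_le_rpow (by positivity) hq (by linarith)
  exact hterm.trans (mul_le_mul hq2 hterm2 htn (by positivity))

end Aux

/-- Lipschitz bounds for the truncated fractional maximal function. -/
theorem stmt1 (d : ℕ) (β ε : ℝ) (hβ0 : 0 ≤ β) (hβd : β < d) (hε : 0 < ε)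
    (f : Ed d → ℝ) (hf : Integrable f) :
    (∀ x y : Ed d,
      |tMax d β ε f x - tMax d β ε f y| ≤
        (((d : ℝ) - β) / ε) * dist x y * (tMax d β ε f x + tMax d β ε f y) ∧
      (((d : ℝ) - β) / ε) * dist x y * (tMax d β ε f x + tMax d β ε f y) ≤
        (2 * ((d : ℝ) - β) / ((volume (ball (0 : Ed d) 1)).toReal * ε ^ ((d : ℝ) + 1 - β)))
          * (∫ z, |f z|) * dist x y) ∧
    ∃ K : ℝ≥0, LipschitzWith K (tMax d β ε f) := by
  have hd : 0 < d := by exact_mod_cast hβ0.trans_lt hβd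
  set ωv := (volume (ball (0 : Ed d) 1)).toReal with hω
  have hω0 : 0 < ωv := omega_pos
  set L := ∫ z, |f z| with hL
  have hL0 : 0 ≤ L := integral_nonneg fun z => abs_nonneg _
  set a := (d : ℝ) - β with ha
  have ha0 : 0 < a := by rw [ha]; linarith
  set M := tMax d β ε f with hM
  have hMn : ∀ x, 0 ≤ M x := fun x => tMax_nonneg hd hβd hε hf x
  have hMle : ∀ x, M x ≤ ε ^ (β - (d : ℝ)) * ωv⁻¹ * L := fun x => tMax_le hd hβd hε hf x
  have hone : ∀ x y : Ed d, M x - M y ≤ a / ε * dist x y * (M x + M y) := by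
    intro x y
    set t := dist x y with ht
    have ht0 : 0 ≤ t := dist_nonneg
    set s := t / ε with hs
    have hs0 : 0 ≤ s := by positivity
    have heq : a / ε * t = a * s := by rw [hs]; ring
    rw [heq]
    rcases le_or_gt 1 (a * s) with hcase | hcase
    · nlinarith [hMn x, hMn y]
    · have hkey := tMax_key hd hβd hε hf x y
      rw [← ht, ← hs, ← ha, ← hM] at hkey
      have h1s : (0 : ℝ) < 1 + s := by linarith
      have hlog1 : Real.log (1 + s) ≤ s := by
        have := Real.log_le_sub_one_of_pos h1s; linarith
      have hlog2 : Real.log (1 - a * s) ≤ -(a * s) := by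
        have := Real.log_le_sub_one_of_pos (show (0:ℝ) < 1 - a * s by linarith); linarith
      have hexp : (1 + s) ^ a ≤ (1 - a * s)⁻¹ := by
        rw [Real.rpow_def_of_pos h1s,
          ← Real.exp_log (inv_pos.2 (show (0:ℝ) < 1 - a * s by linarith))]
        apply Real.exp_le_exp.2
        rw [Real.log_inv]
        nlinarith [hlog1, hlog2]
      have h2 : M x ≤ (1 - a * s)⁻¹ * M y :=
        hkey.trans (mul_le_mul_of_nonneg_right hexp (hMn y))
      have h3 : (1 - a * s) * M x ≤ M y := by
        have := mul_le_mul_of_nonneg_left h2 (show (0:ℝ) ≤ 1 - a * s by linarith)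
        rwa [← mul_assoc, mul_inv_cancel₀ (show (1 : ℝ) - a * s ≠ 0 by linarith),
          one_mul] at this
      nlinarith [hMn x, hMn y, mul_nonneg (mul_nonneg ha0.le hs0) (hMn y)]
  have habs : ∀ x y : Ed d, |M x - M y| ≤ a / ε * dist x y * (M x + M y) := by
    intro x y
    refine abs_sub_le_iff.2 ⟨hone x y, ?_⟩
    calc M y - M x ≤ a / ε * dist y x * (M y + M x) := hone y x
      _ = a / ε * dist x y * (M x + M y) := by rw [dist_comm]; ring
  have hpow : ε ^ ((d : ℝ) + 1 - β) * ε ^ (β - (d : ℝ)) = ε := by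
    rw [← Real.rpow_add hε]
    norm_num
  have hsec : ∀ x y : Ed d, a / ε * dist x y * (M x + M y) ≤
      2 * a / (ωv * ε ^ ((d : ℝ) + 1 - β)) * L * dist x y := by
    intro x y
    have hMM : M x + M y ≤ 2 * (ε ^ (β - (d : ℝ)) * ωv⁻¹ * L) := by
      linarith [hMle x, hMle y]
    have hc0 : 0 ≤ a / ε * dist x y :=
      mul_nonneg (div_nonneg ha0.le hε.le) dist_nonneg
    calc a / ε * dist x y * (M x + M y)
        ≤ a / ε * dist x y * (2 * (ε ^ (β - (d : ℝ)) * ωv⁻¹ * L)) :=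
          mul_le_mul_of_nonneg_left hMM hc0
      _ = 2 * a / (ωv * ε ^ ((d : ℝ) + 1 - β)) * L * dist x y := by
          have h1 : (ε : ℝ) ^ ((d : ℝ) + 1 - β) ≠ 0 := by positivity
          have h2 : (ε : ℝ) ^ (β - (d : ℝ)) ≠ 0 := by positivity
          field_simp
          linear_combination (L * dist x y) * hpow
  have hC0 : 0 ≤ 2 * a / (ωv * ε ^ ((d : ℝ) + 1 - β)) * L := by
    apply mul_nonneg _ hL0
    apply div_nonneg (by linarith) (by positivity)
  refine ⟨fun x y => ⟨habs x y, hsec x y⟩,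
    ⟨Real.toNNReal (2 * a / (ωv * ε ^ ((d : ℝ) + 1 - β)) * L), ?_⟩⟩
  apply LipschitzWith.of_dist_le_mul
  intro x y
  rw [Real.dist_eq, Real.coe_toNNReal _ hC0]
  calc |M x - M y| ≤ a / ε * dist x y * (M x + M y) := habs x y
    _ ≤ 2 * a / (ωv * ε ^ ((d : ℝ) + 1 - β)) * L * dist x y := hsec x y
    _ = 2 * a / (ωv * ε ^ ((d : ℝ) + 1 - β)) * L * dist x y := rfl
end
end

section
/- Let 0 < β < d. If f ∈ L¹(ℝ^d) is a continuous function, then the centered fractional maximal function M_β f is continuous on ℝ^d. -/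
open MeasureTheory Metric Filter
open scoped RealInnerProductSpace ENNReal NNReal Topology

noncomputable section

namespace Stmt2Aux

/-- One term of the supremum defining `cMax`. -/
noncomputable def A (d : ℕ) (β : ℝ) (f : Ed d → ℝ) (x : Ed d) (r : ℝ) : ℝ :=
  r ^ β * ⨍ y in ball x r, |f y|

lemma cMax_eq (d : ℕ) (β : ℝ) (f : Ed d → ℝ) (x : Ed d) :
    cMax d β f x = ⨆ r : Set.Ioi (0:ℝ), A d β f x (r : ℝ) := rfl

/-- The volume of the unit ball, as a real number. -/
noncomputable def bc (d : ℕ) : ℝ := (volume (ball (0 : Ed d) 1)).toReal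

/-- The integral of `|f|` over a ball. -/
noncomputable def I (d : ℕ) (f : Ed d → ℝ) (x : Ed d) (r : ℝ) : ℝ :=
  ∫ y in ball x r, |f y|

variable {d : ℕ} {β : ℝ} {f : Ed d → ℝ}

lemma nontrivialEd (hd : 0 < d) : Nontrivial (Ed d) := by
  have : Nonempty (Fin d) := ⟨⟨0, hd⟩⟩
  infer_instance

lemma bc_pos (hd : 0 < d) : 0 < bc d := by
  haveI := nontrivialEd hd
  exact ENNReal.toReal_pos (measure_ball_pos volume _ one_pos).ne' measure_ball_lt_top.ne

lemma vol_ball (hd : 0 < d) (x : Ed d) {r : ℝ} (hr : 0 ≤ r) :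
    (volume (ball x r)).toReal = r ^ d * bc d := by
  haveI := nontrivialEd hd
  rw [Measure.addHaar_ball volume x hr, finrank_euclideanSpace_fin, ENNReal.toReal_mul,
    ENNReal.toReal_ofReal (pow_nonneg hr d), bc]

lemma I_nonneg (x : Ed d) (r : ℝ) : 0 ≤ I d f x r :=
  setIntegral_nonneg measurableSet_ball fun _ _ => abs_nonneg _

lemma I_mono (hf : Integrable f) {x x' : Ed d} {r r' : ℝ}
    (h : ball x r ⊆ ball x' r') : I d f x r ≤ I d f x' r' :=
  setIntegral_mono_set hf.abs.integrableOn
    (Eventually.of_forall fun _ => abs_nonneg _) (HasSubset.Subset.eventuallyLE h)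

lemma I_le (hf : Integrable f) (x : Ed d) (r : ℝ) : I d f x r ≤ ∫ y, |f y| :=
  setIntegral_le_integral hf.abs (Eventually.of_forall fun _ => abs_nonneg _)

lemma A_eq (hd : 0 < d) (x : Ed d) {r : ℝ} (hr : 0 < r) :
    A d β f x r = r ^ (β - d) * ((bc d)⁻¹ * I d f x r) := by
  rw [A, setAverage_eq, smul_eq_mul, measureReal_def, vol_ball hd x hr.le]
  have h1 : (r : ℝ) ^ (d : ℕ) = r ^ ((d : ℕ) : ℝ) := (Real.rpow_natCast r d).symm
  have h2 : r ^ β * (r ^ ((d:ℕ):ℝ))⁻¹ = r ^ (β - d) := by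
    rw [← Real.rpow_neg hr.le, ← Real.rpow_add hr]
    ring_nf
  rw [h1, mul_inv, ← mul_assoc, ← mul_assoc, ← mul_assoc, h2, I, mul_assoc]

lemma A_nonneg (hd : 0 < d) (x : Ed d) {r : ℝ} (hr : 0 < r) : 0 ≤ A d β f x r := by
  rw [A_eq hd x hr]
  exact mul_nonneg (Real.rpow_pos_of_pos hr _).le
    (mul_nonneg (inv_nonneg.mpr (bc_pos hd).le) (I_nonneg x r))

lemma A_le_of_subset (hd : 0 < d) (hβd : β ≤ d) (hf : Integrable f)
    {x x' : Ed d} {r r' : ℝ} (hr : 0 < r) (hrr' : r ≤ r')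
    (hsub : ball x r ⊆ ball x' r') :
    A d β f x r ≤ (r' / r) ^ ((d : ℝ) - β) * A d β f x' r' := by
  have hr' : 0 < r' := lt_of_lt_of_le hr hrr'
  rw [A_eq hd x hr, A_eq hd x' hr']
  have hbc := bc_pos (d := d) hd
  have key : (r : ℝ) ^ (β - d) = (r' / r) ^ ((d : ℝ) - β) * r' ^ (β - (d:ℝ)) := by
    rw [Real.div_rpow hr'.le hr.le, div_mul_eq_mul_div, ← Real.rpow_add hr']
    have : (d : ℝ) - β + (β - d) = 0 := by ring
    rw [this, Real.rpow_zero]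
    rw [eq_div_iff (Real.rpow_pos_of_pos hr _).ne', ← Real.rpow_add hr]
    have : β - (d:ℝ) + ((d:ℝ) - β) = 0 := by ring
    rw [this, Real.rpow_zero]
  calc r ^ (β - (d:ℝ)) * ((bc d)⁻¹ * I d f x r)
      ≤ r ^ (β - (d:ℝ)) * ((bc d)⁻¹ * I d f x' r') := by
        refine mul_le_mul_of_nonneg_left ?_ (Real.rpow_pos_of_pos hr _).le
        exact mul_le_mul_of_nonneg_left (I_mono hf hsub) (inv_nonneg.mpr hbc.le)
    _ = (r' / r) ^ ((d : ℝ) - β) * (r' ^ (β - (d:ℝ)) * ((bc d)⁻¹ * I d f x' r')) := by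
        rw [key]; ring

lemma A_le_const (hd : 0 < d) (hcont : Continuous f) {x : Ed d} {r : ℝ} (hr : 0 < r)
    {C : ℝ} (hC0 : 0 ≤ C) (hC : ∀ y ∈ ball x r, |f y| ≤ C) :
    A d β f x r ≤ r ^ β * C := by
  rw [A]
  have hvol : (0:ℝ) < (volume (ball x r)).toReal := by
    rw [vol_ball hd x hr.le]
    exact mul_pos (pow_pos hr d) (bc_pos hd)
  have havg : ⨍ y in ball x r, |f y| ≤ C := by
    rw [setAverage_eq, smul_eq_mul]
    have hint : ∫ y in ball x r, |f y| ≤ C * (volume (ball x r)).toReal := by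
      have := norm_setIntegral_le_of_norm_le_const (μ := volume) (s := ball x r)
        (f := fun y => |f y|) measure_ball_lt_top (fun y hy => by
          rw [Real.norm_eq_abs, abs_abs]; exact hC y hy)
      exact le_trans (le_abs_self _) this
    calc (volume (ball x r)).toReal⁻¹ * ∫ y in ball x r, |f y|
        ≤ (volume (ball x r)).toReal⁻¹ * (C * (volume (ball x r)).toReal) := by
          gcongr
      _ = C := by field_simp
  have : (0:ℝ) ≤ r ^ β := (Real.rpow_pos_of_pos hr _).le
  exact mul_le_mul_of_nonneg_left havg this

instance : Nonempty (Set.Ioi (0:ℝ)) := ⟨⟨1, Set.mem_Ioi.mpr one_pos⟩⟩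

lemma bddAboveA (hd : 0 < d) (hβ0 : 0 ≤ β) (hβd : β ≤ d) (hf : Integrable f)
    (hcont : Continuous f) (x : Ed d) :
    BddAbove (Set.range fun r : Set.Ioi (0:ℝ) => A d β f x (r : ℝ)) := by
  obtain ⟨C, hC⟩ := (isCompact_closedBall x 1).exists_bound_of_continuousOn hcont.continuousOn
  refine ⟨max (max C 0) ((bc d)⁻¹ * ∫ y, |f y|), ?_⟩
  rintro _ ⟨⟨r, hr⟩, rfl⟩
  simp only [Set.mem_Ioi] at hr
  show A d β f x r ≤ _
  by_cases hr1 : r ≤ 1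
  · refine le_trans ?_ (le_max_left _ _)
    have hsub : ball x r ⊆ closedBall x 1 :=
      (ball_subset_ball hr1).trans ball_subset_closedBall
    have := A_le_const (f := f) (β := β) hd hcont hr (le_max_right C 0)
      (fun y hy => by
        have h := hC y (hsub hy)
        rw [Real.norm_eq_abs] at h
        exact h.trans (le_max_left C 0))
    refine this.trans ?_
    calc r ^ β * max C 0 ≤ 1 * max C 0 :=
          mul_le_mul_of_nonneg_right (Real.rpow_le_one hr.le hr1 hβ0) (le_max_right C 0)
      _ = max C 0 := one_mul _
  · refine le_trans ?_ (le_max_right _ _)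
    push_neg at hr1
    rw [A_eq hd x hr]
    have h1 : r ^ (β - (d:ℝ)) ≤ 1 :=
      Real.rpow_le_one_of_one_le_of_nonpos hr1.le (by linarith)
    have h2 : (bc d)⁻¹ * I d f x r ≤ (bc d)⁻¹ * ∫ y, |f y| := by
      gcongr
      · exact (inv_pos.mpr (bc_pos hd)).le
      · exact I_le hf x r
    have h3 : (0:ℝ) ≤ (bc d)⁻¹ * I d f x r :=
      mul_nonneg (inv_pos.mpr (bc_pos hd)).le (I_nonneg x r)
    calc r ^ (β - (d:ℝ)) * ((bc d)⁻¹ * I d f x r)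
        ≤ 1 * ((bc d)⁻¹ * I d f x r) := mul_le_mul_of_nonneg_right h1 h3
      _ = (bc d)⁻¹ * I d f x r := one_mul _
      _ ≤ (bc d)⁻¹ * ∫ y, |f y| := h2

lemma le_cMax (hd : 0 < d) (hβ0 : 0 ≤ β) (hβd : β ≤ d) (hf : Integrable f)
    (hcont : Continuous f) (x : Ed d) {r : ℝ} (hr : 0 < r) :
    A d β f x r ≤ cMax d β f x := by
  rw [cMax_eq]
  exact le_ciSup (bddAboveA hd hβ0 hβd hf hcont x) ⟨r, hr⟩

lemma cMax_le {x : Ed d} {B : ℝ} (h : ∀ r : ℝ, 0 < r → A d β f x r ≤ B) :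
    cMax d β f x ≤ B := by
  rw [cMax_eq]
  exact ciSup_le fun ⟨r, hr⟩ => h r hr

lemma cMax_nonneg (hd : 0 < d) (hβ0 : 0 ≤ β) (hβd : β ≤ d) (hf : Integrable f)
    (hcont : Continuous f) (x : Ed d) : 0 ≤ cMax d β f x :=
  le_trans (A_nonneg hd x one_pos) (le_cMax hd hβ0 hβd hf hcont x one_pos)

lemma cMax_pos (hd : 0 < d) (hβ0 : 0 ≤ β) (hβd : β ≤ d) (hf : Integrable f)
    (hcont : Continuous f) {y₀ : Ed d} (hy₀ : f y₀ ≠ 0) (x : Ed d) :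
    0 < cMax d β f x := by
  set R : ℝ := dist x y₀ + 1 with hR
  have hRpos : 0 < R := by positivity
  have hI : 0 < I d f x R := by
    rw [I, setIntegral_pos_iff_support_of_nonneg_ae
      (Eventually.of_forall fun _ => abs_nonneg _) hf.abs.integrableOn]
    have hopen : IsOpen ({y : Ed d | f y ≠ 0} ∩ ball x R) :=
      (isOpen_compl_singleton.preimage hcont).inter isOpen_ball
    have hsub : {y : Ed d | f y ≠ 0} ∩ ball x R ⊆
        Function.support (fun y => |f y|) ∩ ball x R := by
      intro y hy
      exact ⟨by simpa [Function.mem_support, abs_ne_zero] using hy.1, hy.2⟩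
    refine lt_of_lt_of_le ?_ (measure_mono hsub)
    refine hopen.measure_pos volume ⟨y₀, hy₀, ?_⟩
    rw [mem_ball, dist_comm]
    simp [hR]
  have hA : 0 < A d β f x R := by
    rw [A_eq hd x hRpos]
    have := bc_pos (d := d) hd
    positivity
  exact lt_of_lt_of_le hA (le_cMax hd hβ0 hβd hf hcont x hRpos)

/-- The key two-sided estimate. -/
lemma cMax_le_max (hd : 0 < d) (hβ0 : 0 ≤ β) (hβd : β ≤ d) (hf : Integrable f)
    (hcont : Continuous f) (x₀ x x' : Ed d) (hx : dist x x₀ ≤ 1)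
    {C : ℝ} (hC0 : 0 ≤ C) (hC : ∀ y ∈ closedBall x₀ 2, |f y| ≤ C)
    {r₀ : ℝ} (h0 : 0 < r₀) (h1 : r₀ ≤ 1) :
    cMax d β f x ≤
      max (r₀ ^ β * C) ((1 + dist x x' / r₀) ^ ((d : ℝ) - β) * cMax d β f x') := by
  apply cMax_le
  intro r hr
  by_cases hrr : r < r₀
  · refine le_trans ?_ (le_max_left _ _)
    have hsub : ball x r ⊆ closedBall x₀ 2 := by
      intro y hy
      rw [mem_ball] at hy
      rw [mem_closedBall]
      calc dist y x₀ ≤ dist y x + dist x x₀ := dist_triangle _ _ _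
        _ ≤ 2 := by nlinarith
    have := A_le_const (f := f) (β := β) hd hcont hr hC0 (fun y hy => hC y (hsub hy))
    refine this.trans ?_
    gcongr
  · push_neg at hrr
    refine le_trans ?_ (le_max_right _ _)
    set δ : ℝ := dist x x' with hδ
    have hδ0 : 0 ≤ δ := dist_nonneg
    have hsub : ball x r ⊆ ball x' (r + δ) := by
      intro y hy
      rw [mem_ball] at hy ⊢
      calc dist y x' ≤ dist y x + dist x x' := dist_triangle _ _ _
        _ < r + δ := by linarith
    have h1' := A_le_of_subset (f := f) (β := β) hd hβd hf hr (by linarith) hsub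
    refine h1'.trans ?_
    have hbase : (r + δ) / r ≤ 1 + δ / r₀ := by
      rw [add_div, div_self hr.ne']
      have : δ / r ≤ δ / r₀ := by gcongr
      linarith
    have hbase0 : (1:ℝ) ≤ (r + δ) / r := by
      rw [le_div_iff₀ hr]
      linarith
    have hexp : (0:ℝ) ≤ (d:ℝ) - β := by linarith
    have hA' : A d β f x' (r + δ) ≤ cMax d β f x' :=
      le_cMax hd hβ0 hβd hf hcont x' (by linarith)
    have hAnn : 0 ≤ A d β f x' (r + δ) := A_nonneg hd x' (by linarith)
    calc ((r + δ) / r) ^ ((d:ℝ) - β) * A d β f x' (r + δ)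
        ≤ ((1 + δ / r₀)) ^ ((d:ℝ) - β) * A d β f x' (r + δ) :=
          mul_le_mul_of_nonneg_right
            (Real.rpow_le_rpow (by positivity) hbase hexp) hAnn
      _ ≤ ((1 + δ / r₀)) ^ ((d:ℝ) - β) * cMax d β f x' :=
          mul_le_mul_of_nonneg_left hA'
            (Real.rpow_pos_of_pos (by positivity) _).le

end Stmt2Aux

open Stmt2Aux in
/-- if `f ∈ L¹(ℝ^d)` is continuous, then `M_β f` is continuous. -/
theorem stmt2 (d : ℕ) (β : ℝ) (hβ0 : 0 < β) (hβd : β < d)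
    (f : Ed d → ℝ) (hf : Integrable f) (hcont : Continuous f) :
    Continuous (cMax d β f) := by
  have hd : 0 < d := by
    by_contra h
    push_neg at h
    interval_cases d
    · simp at hβd
      linarith
  by_cases hzero : ∀ y, f y = 0
  · have : cMax d β f = fun _ => 0 := by
      funext x
      rw [cMax_eq]
      have : ∀ r : Set.Ioi (0:ℝ), A d β f x (r:ℝ) = 0 := by
        intro r
        simp [A, hzero]
      simp only [this, ciSup_const]
    rw [this]
    exact continuous_const
  · push_neg at hzero
    obtain ⟨y₀, hy₀⟩ := hzero
    rw [continuous_iff_continuousAt]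
    intro x₀
    set m : ℝ := cMax d β f x₀ with hm
    have hmpos : 0 < m := cMax_pos hd hβ0.le hβd.le hf hcont hy₀ x₀
    -- bound on closedBall x₀ 2
    obtain ⟨C₀, hC₀⟩ := (isCompact_closedBall x₀ 2).exists_bound_of_continuousOn
      hcont.continuousOn
    set C : ℝ := max C₀ 0 with hCdef
    have hC0 : 0 ≤ C := le_max_right _ _
    have hC : ∀ y ∈ closedBall x₀ 2, |f y| ≤ C := fun y hy =>
      le_trans ((Real.norm_eq_abs _).symm.trans_le (hC₀ y hy)) (le_max_left _ _)
    -- choose r₀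
    have htend : Tendsto (fun r : ℝ => r ^ β * C) (𝓝[>] 0) (𝓝 0) := by
      have h1 : ContinuousAt (fun r : ℝ => r ^ β) 0 :=
        Real.continuousAt_rpow_const 0 β (Or.inr hβ0.le)
      have := (h1.tendsto.mono_left (nhdsWithin_le_nhds (s := Set.Ioi (0:ℝ)))).mul_const C
      simpa [Real.zero_rpow hβ0.ne'] using this
    have hev1 : ∀ᶠ r in 𝓝[>] (0:ℝ), r ^ β * C < m := htend.eventually_lt_const hmpos
    have hev2 : ∀ᶠ r in 𝓝[>] (0:ℝ), r < 1 :=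
      eventually_nhdsWithin_of_eventually_nhds (eventually_lt_nhds one_pos)
    obtain ⟨r₀, hr₀m, hr₀1, hr₀pos⟩ :=
      (hev1.and (hev2.and self_mem_nhdsWithin)).exists
    have hr₀pos : 0 < r₀ := hr₀pos
    -- squeeze
    set e : ℝ := (d : ℝ) - β with he
    have hepos : 0 < e := by simp only [he]; linarith
    have ht : Tendsto (fun x : Ed d => (1 + dist x x₀ / r₀) ^ e) (𝓝 x₀) (𝓝 1) := by
      have hc : Continuous (fun x : Ed d => 1 + dist x x₀ / r₀) := by
        continuity
      have h1 : ContinuousAt (fun t : ℝ => t ^ e) (1 + dist x₀ x₀ / r₀) := by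
        apply Real.continuousAt_rpow_const
        left
        simp
      have := h1.tendsto.comp (hc.tendsto x₀)
      simpa [Function.comp_def] using this
    have hu : Tendsto (fun x : Ed d => (1 + dist x x₀ / r₀) ^ e * m) (𝓝 x₀) (𝓝 m) := by
      simpa using ht.mul_const m
    have hl : Tendsto (fun x : Ed d => ((1 + dist x x₀ / r₀) ^ e)⁻¹ * m) (𝓝 x₀) (𝓝 m) := by
      simpa using (ht.inv₀ one_ne_zero).mul_const m
    have hbpos : ∀ x : Ed d, (0:ℝ) < (1 + dist x x₀ / r₀) ^ e := fun x =>
      Real.rpow_pos_of_pos (by positivity) _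
    have hbone : ∀ x : Ed d, (1:ℝ) ≤ (1 + dist x x₀ / r₀) ^ e := fun x =>
      Real.one_le_rpow (le_add_of_nonneg_right (div_nonneg dist_nonneg hr₀pos.le)) hepos.le
    have hballev : ∀ᶠ x in 𝓝 x₀, x ∈ ball x₀ 1 := ball_mem_nhds x₀ one_pos
    have hub : ∀ᶠ x in 𝓝 x₀, cMax d β f x ≤ (1 + dist x x₀ / r₀) ^ e * m := by
      filter_upwards [hballev] with x hx
      have := cMax_le_max hd hβ0.le hβd.le hf hcont x₀ x x₀
        (mem_ball.mp hx).le hC0 hC hr₀pos hr₀1.le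
      rw [← hm] at this
      refine this.trans (max_le ?_ le_rfl)
      calc r₀ ^ β * C ≤ m := hr₀m.le
        _ ≤ (1 + dist x x₀ / r₀) ^ e * m := by
          nlinarith [hbone x, hmpos]
    have hlb : ∀ᶠ x in 𝓝 x₀, ((1 + dist x x₀ / r₀) ^ e)⁻¹ * m ≤ cMax d β f x := by
      filter_upwards [hballev] with x hx
      have hkey := cMax_le_max hd hβ0.le hβd.le hf hcont x₀ x₀ x
        (by simp) hC0 hC hr₀pos hr₀1.le
      rw [← hm, dist_comm x₀ x] at hkey
      have hm2 : m ≤ (1 + dist x x₀ / r₀) ^ e * cMax d β f x := by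
        rcases max_cases (r₀ ^ β * C) ((1 + dist x x₀ / r₀) ^ e * cMax d β f x) with
          ⟨heq, hge⟩ | ⟨heq, _⟩
        · rw [heq] at hkey; linarith [hr₀m]
        · rw [heq] at hkey; exact hkey
      rw [inv_mul_le_iff₀ (hbpos x)]
      exact hm2
    exact tendsto_of_tendsto_of_tendsto_of_le_of_le' hl hu hlb hub
end
end

section
/- Let f ∈ L¹_loc(ℝ^d) be nonnegative and radial, f(x) = F(|x|) for F : (0,∞) → [0,∞). Let B := B(z,r) be a ball with B ⊂ B(0,2|z|) \ B(0,|z|/2), and set a := |z| − r, b := |z| + r. Then (1/(b−a)) ∫_a^b F(t) dt ≤ C(d) ⨍_{B(z,2r)} f(y) dy for a constant C(d) depending only on d. -/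
open MeasureTheory Metric Filter
open scoped RealInnerProductSpace ENNReal NNReal Topology

noncomputable section

private lemma ed_norm_sq {m : ℕ} (v : EuclideanSpace ℝ (Fin m)) : ‖v‖ ^ 2 = ∑ i, v i ^ 2 := by
  rw [EuclideanSpace.norm_eq, Real.sq_sqrt (by positivity)]
  exact Finset.sum_congr rfl fun i _ => by rw [Real.norm_eq_abs, sq_abs]

private lemma ed_ball_vol (m : ℕ) (x : EuclideanSpace ℝ (Fin m)) {ρ : ℝ} (hρ : 0 < ρ) :
    volume (ball x ρ) = ENNReal.ofReal (ρ ^ m) * volume (ball (0 : EuclideanSpace ℝ (Fin m)) 1) := by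
  cases m with
  | zero =>
      have h1 : ball x ρ = Set.univ := Set.eq_univ_of_forall fun y => by
        simp [mem_ball, Subsingleton.elim y x, hρ]
      have h2 : ball (0 : EuclideanSpace ℝ (Fin 0)) 1 = Set.univ :=
        Set.eq_univ_of_forall fun y => by
          simp [mem_ball, Subsingleton.elim y (0 : EuclideanSpace ℝ (Fin 0)), one_pos]
      simp [h1, h2]
  | succ k =>
      rw [Measure.addHaar_ball volume x hρ.le, finrank_euclideanSpace_fin]

private lemma ed_ball_pos (m : ℕ) :
    0 < (volume (ball (0 : EuclideanSpace ℝ (Fin m)) 1)).toReal :=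
  ENNReal.toReal_pos (ne_of_gt (measure_ball_pos _ _ one_pos)) (ne_of_lt measure_ball_lt_top)

set_option maxHeartbeats 2000000 in
/-- one-dimensional averages of the radial profile are controlled
by averages over a doubled ball, for balls inside the annulus
`B(0,2|z|) \ B(0,|z|/2)`. -/
theorem stmt14 (d : ℕ) (hd : 0 < d) :
    ∃ C : ℝ, 0 < C ∧
      ∀ (f : Ed d → ℝ) (F : ℝ → ℝ) (z : Ed d) (r : ℝ), 0 < r →
        LocallyIntegrable f volume → (∀ y, 0 ≤ f y) →
        (∀ y : Ed d, y ≠ 0 → f y = F ‖y‖) →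
        ball z r ⊆ ball 0 (2 * ‖z‖) \ ball 0 (‖z‖ / 2) →
        (1 / ((‖z‖ + r) - (‖z‖ - r))) * (∫ t in (‖z‖ - r)..(‖z‖ + r), F t) ≤
          C * ⨍ y in ball z (2 * r), f y := by
  obtain ⟨n, rfl⟩ : ∃ n, d = n + 1 := ⟨d - 1, (Nat.succ_pred_eq_of_pos hd).symm⟩
  set vA : ℝ := (volume (ball (0 : Ed (n+1)) 1)).toReal with hvA
  set vB : ℝ := (volume (ball (0 : Ed n) 1)).toReal with hvB
  have hvA0 : 0 < vA := ed_ball_pos _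
  have hvB0 : 0 < vB := ed_ball_pos _
  refine ⟨(5/2) ^ n * vA / vB, by positivity, ?_⟩
  intro f F z r hr hloc hfpos hrad hball
  -- basic geometry
  have hz : 0 < ‖z‖ := by
    have := hball (mem_ball_self hr)
    have h1 : ‖z‖ < 2 * ‖z‖ := by simpa [mem_ball, dist_zero_right] using this.1
    linarith
  have hzne : z ≠ 0 := by simpa using norm_pos_iff.mp hz
  have h2r : 2 * r ≤ ‖z‖ := by
    set u : Ed (n+1) := ‖z‖⁻¹ • z with hu
    have hnorm : ∀ s : ℝ, ‖z - s • u‖ = |‖z‖ - s| := by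
      intro s
      have : z - s • u = (1 - s * ‖z‖⁻¹) • z := by
        rw [hu, smul_smul, sub_smul, one_smul]
      rw [this, norm_smul, Real.norm_eq_abs, ← abs_of_nonneg (norm_nonneg z), ← abs_mul]
      congr 1
      field_simp
      simp only [abs_norm]; ring
    have key : ∀ s : ℝ, 0 ≤ s → s < r → ‖z‖ / 2 ≤ |‖z‖ - s| := by
      intro s hs0 hs
      have hmem : z - s • u ∈ ball z r := by
        rw [mem_ball, dist_eq_norm]
        have : z - s • u - z = -(s • u) := by abel
        rw [this, norm_neg, norm_smul, hu, norm_smul]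
        simp only [Real.norm_eq_abs, norm_inv, abs_norm]
        rw [abs_of_nonneg ‹0 ≤ s›]
        rw [inv_mul_cancel₀ (ne_of_gt hz), mul_one]
        exact hs
      have hnot := (hball hmem).2
      rw [mem_ball, dist_zero_right, hnorm s, not_lt] at hnot
      exact hnot
    have hrz : r ≤ ‖z‖ := by
      by_contra hcon
      push_neg at hcon
      have := key ‖z‖ (norm_nonneg z) hcon
      simp at this
      linarith
    by_contra hcon
    push_neg at hcon
    have h2 : ‖z‖ / 2 < r := by linarith
    set s := (‖z‖ / 2 + r) / 2 with hs
    have hs0 : 0 ≤ s := by positivity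
    have hsr : s < r := by rw [hs]; linarith
    have hsz : s ≤ ‖z‖ := by rw [hs]; linarith
    have := key s hs0 hsr
    rw [abs_of_nonneg (by linarith)] at this
    rw [hs] at this
    linarith
  -- notation
  set e₀ : Ed (n+1) := EuclideanSpace.single 0 1 with he₀
  have he₀n : ‖e₀‖ = 1 := by
    rw [he₀, EuclideanSpace.norm_single]; simp
  have hFval : ∀ t : ℝ, 0 < t → F t = f (t • e₀) := by
    intro t ht
    have hn : ‖t • e₀‖ = t := by
      rw [norm_smul, he₀n, mul_one, Real.norm_eq_abs, abs_of_pos ht]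
    have hne : t • e₀ ≠ 0 := by
      intro hcon
      rw [hcon] at hn; simp at hn; linarith
    rw [hrad _ hne, hn]
  set a : ℝ := ‖z‖ - r with ha
  set b : ℝ := ‖z‖ + r with hb
  have har : r ≤ a := by rw [ha]; linarith
  have hapos : 0 < a := lt_of_lt_of_le hr har
  have hab : a < b := by rw [ha, hb]; linarith
  set g : Ed (n+1) → ℝ≥0∞ := fun y => ENNReal.ofReal (f y) with hg
  set K := ∫⁻ y in ball z (2*r), g y with hK
  set L := ∫⁻ s in Set.Ioo a b, ENNReal.ofReal (F s) with hL
  -- the key estimate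
  have hKL : L * (ENNReal.ofReal ((4/5*r)^n) * volume (ball (0 : Ed n) 1)) ≤ K := by
    classical
    set z₀ : Ed (n+1) := ‖z‖ • e₀ with hz₀def
    have hz₀ : ‖z₀‖ = ‖z‖ := by
      rw [hz₀def, norm_smul, he₀n, mul_one, Real.norm_eq_abs, abs_of_pos hz]
    set Q := Submodule.reflection (ℝ ∙ (z - z₀))ᗮ with hQdef
    have hQz : Q z = z₀ := Submodule.reflection_sub hz₀.symm
    have hQsymm : Q.symm z₀ = z := by rw [← hQz]; exact Q.symm_apply_apply z
    set ψ := MeasurableEquiv.piFinSuccAbove (fun _ : Fin (n+1) => ℝ) 0 with hψdef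
    set φ := (MeasurableEquiv.toLp 2 (Fin (n+1) → ℝ)).symm with hφdef
    set S : ℝ × (Fin n → ℝ) → Ed (n+1) := fun p => Q.symm (φ.symm (ψ.symm p)) with hSdef
    have hSmp : MeasurePreserving S volume volume :=
      (LinearIsometryEquiv.measurePreserving _).comp
        (((EuclideanSpace.volume_preserving_symm_measurableEquiv_toLp _).symm).comp
          ((volume_preserving_piFinSuccAbove (fun _ : Fin (n+1) => ℝ) 0).symm))
    have hSemb : MeasurableEmbedding S :=
      (Q.symm.toHomeomorph.measurableEmbedding).comp
        ((φ.symm.measurableEmbedding).comp (ψ.symm.measurableEmbedding))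
    have hz00 : z₀ 0 = ‖z‖ := by
      simp [hz₀def, he₀, EuclideanSpace.single_apply]
    have hz0s : ∀ j : Fin n, z₀ j.succ = 0 := fun j => by
      simp [hz₀def, he₀, EuclideanSpace.single_apply, Fin.succ_ne_zero j]
    have hSsq : ∀ (t : ℝ) (w : Fin n → ℝ), ‖S (t, w)‖^2 = t^2 + ∑ j, w j ^2 := by
      intro t w
      have h0 : ‖S (t,w)‖ = ‖φ.symm (ψ.symm (t,w))‖ := Q.symm.norm_map _
      rw [h0, ed_norm_sq, Fin.sum_univ_succ]
      have hc : ∀ i, (φ.symm (ψ.symm (t, w))) i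
          = Fin.insertNth (α := fun _ : Fin (n+1) => ℝ) 0 t w i := fun i => rfl
      have e0 : (φ.symm (ψ.symm (t, w))) 0 = t := by rw [hc 0, Fin.insertNth_apply_same]
      have es : ∀ j : Fin n, (φ.symm (ψ.symm (t, w))) j.succ = w j := fun j => by
        rw [hc j.succ, ← Fin.zero_succAbove j, Fin.insertNth_apply_succAbove]
      have hsum : ∑ j : Fin n, (φ.symm (ψ.symm (t, w))) j.succ ^ 2 = ∑ j, w j ^2 :=
        Finset.sum_congr rfl fun j _ => by rw [es j]
      rw [e0, hsum]
    have hSdist : ∀ (t : ℝ) (w : Fin n → ℝ), ‖S (t, w) - z‖^2 = (t - ‖z‖)^2 + ∑ j, w j ^2 := by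
      intro t w
      have h0 : ‖S (t,w) - z‖ = ‖φ.symm (ψ.symm (t,w)) - z₀‖ := by
        calc ‖Q.symm (φ.symm (ψ.symm (t,w))) - z‖
            = ‖Q.symm (φ.symm (ψ.symm (t,w)) - z₀)‖ := by rw [map_sub, hQsymm]
          _ = ‖φ.symm (ψ.symm (t,w)) - z₀‖ := Q.symm.norm_map _
      rw [h0, ed_norm_sq, Fin.sum_univ_succ]
      have hc : ∀ i, (φ.symm (ψ.symm (t, w)) - z₀) i
          = Fin.insertNth (α := fun _ : Fin (n+1) => ℝ) 0 t w i - z₀ i := fun i => rfl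
      have e0 : (φ.symm (ψ.symm (t, w)) - z₀) 0 = t - ‖z‖ := by
        rw [hc 0, Fin.insertNth_apply_same, hz00]
      have es : ∀ j : Fin n, (φ.symm (ψ.symm (t, w)) - z₀) j.succ = w j := fun j => by
        rw [hc j.succ, ← Fin.zero_succAbove j, Fin.insertNth_apply_succAbove,
          Fin.zero_succAbove j, hz0s j, sub_zero]
      have hsum : ∑ j : Fin n, (φ.symm (ψ.symm (t, w)) - z₀) j.succ ^ 2 = ∑ j, w j ^2 :=
        Finset.sum_congr rfl fun j _ => by rw [es j]
      rw [e0, hsum]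
    set I : Set ℝ := Set.Ioo (‖z‖ - 9/5*r) (‖z‖ + 9/5*r) with hIdef
    set W : Set (Fin n → ℝ) := {w : Fin n → ℝ | ∑ j, w j ^2 < (4/5*r)^2} with hWdef
    have hWmeas : MeasurableSet W := by
      have hm : Measurable fun w : Fin n → ℝ => ∑ j, w j ^2 :=
        Finset.measurable_sum _ fun j _ => (measurable_pi_apply j).pow_const 2
      exact measurableSet_lt hm measurable_const
    have hPball : ∀ p ∈ I ×ˢ W, S p ∈ ball z (2*r) := by
      rintro ⟨t, w⟩ ⟨htI, hwW⟩
      rw [mem_ball, dist_eq_norm]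
      have habs : |t - ‖z‖| < 9/5*r := abs_lt.2 ⟨by linarith [htI.1], by linarith [htI.2]⟩
      have h1 : (t - ‖z‖)^2 < (9/5*r)^2 := by
        calc (t-‖z‖)^2 = |t-‖z‖|^2 := (sq_abs _).symm
          _ < (9/5*r)^2 := by
              have h95 : (0:ℝ) < 9/5*r := by linarith
              exact pow_lt_pow_left₀ habs (abs_nonneg _) (by norm_num)
      have hsq : ‖S (t,w) - z‖^2 < (2*r)^2 := by
        rw [hSdist]
        have h2 : ∑ j, w j ^2 < (4/5*r)^2 := hwW
        nlinarith
      nlinarith [norm_nonneg (S (t,w) - z), hr]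
    have step1 : ∫⁻ p in I ×ˢ W, g (S p) ≤ K := by
      calc ∫⁻ p in I ×ˢ W, g (S p) = ∫⁻ y in S '' (I ×ˢ W), g y :=
            hSmp.setLIntegral_comp_emb hSemb g _
        _ ≤ K := by
            rw [hK]
            exact lintegral_mono_set (by rintro y ⟨p, hp, rfl⟩; exact hPball p hp)
    have hgaem : AEMeasurable (fun p : ℝ × (Fin n → ℝ) => g (S p))
        ((volume.restrict I).prod (volume.restrict W)) := by
      have h1 : AEMeasurable g volume :=
        ENNReal.measurable_ofReal.comp_aemeasurable hloc.aestronglyMeasurable.aemeasurable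
      have h2 : AEMeasurable (fun p : ℝ × (Fin n → ℝ) => g (S p)) volume :=
        h1.comp_quasiMeasurePreserving hSmp.quasiMeasurePreserving
      rw [Measure.prod_restrict, ← Measure.volume_eq_prod]
      exact h2.restrict
    have step2 : ∫⁻ p in I ×ˢ W, g (S p) = ∫⁻ w in W, ∫⁻ t in I, g (S (t, w)) := by
      rw [Measure.volume_eq_prod, ← Measure.prod_restrict]
      exact lintegral_prod_symm _ hgaem
    have hinner : ∀ w ∈ W, L ≤ ∫⁻ t in I, g (S (t, w)) := by
      intro w hw
      set q : ℝ := ∑ j, w j ^ 2 with hq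
      have hq0 : 0 ≤ q := Finset.sum_nonneg fun j _ => sq_nonneg _
      have hqlt : q < (4/5*r)^2 := hw
      set h : ℝ → ℝ := fun s => Real.sqrt (s^2 - q) with hhdef
      have hspos : ∀ s ∈ Set.Ioo a b, 0 < s^2 - q := by
        rintro s ⟨hs1, _⟩
        have hrs : r < s := lt_of_le_of_lt har hs1
        nlinarith
      have hder : ∀ s ∈ Set.Ioo a b,
          HasDerivWithinAt h (s / Real.sqrt (s^2 - q)) (Set.Ioo a b) s := by
        intro s hs
        have h1 : HasDerivAt (fun x : ℝ => x^2 - q) (2*s) s := by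
          simpa using (hasDerivAt_pow 2 s).sub_const q
        have h2 := h1.sqrt (ne_of_gt (hspos s hs))
        have h3 : 2*s / (2 * Real.sqrt (s^2 - q)) = s / Real.sqrt (s^2 - q) := by
          rw [mul_div_mul_left _ _ (two_ne_zero)]
        rw [h3] at h2
        exact h2.hasDerivWithinAt
      have hinj : Set.InjOn h (Set.Ioo a b) := by
        intro s1 hs1 s2 hs2 heq
        have e1 : s1^2 - q = s2^2 - q :=
          (Real.sqrt_inj (le_of_lt (hspos _ hs1)) (le_of_lt (hspos _ hs2))).1 heq
        have hp1 : 0 < s1 := lt_trans hapos hs1.1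
        have hp2 : 0 < s2 := lt_trans hapos hs2.1
        nlinarith
      have himg : h '' Set.Ioo a b ⊆ I := by
        rintro _ ⟨s, hs, rfl⟩
        have hsa : a < s := hs.1
        have hs0 : 0 < s := lt_trans hapos hsa
        constructor
        · have h95 : 0 ≤ ‖z‖ - 9/5*r := by linarith
          have hA : a^2 < s^2 := by nlinarith
          have hB : (‖z‖ - 9/5*r)^2 + 24/25*r^2 ≤ a^2 := by rw [ha]; nlinarith
          have key : (‖z‖ - 9/5*r)^2 < s^2 - q := by nlinarith
          calc ‖z‖ - 9/5*r = Real.sqrt ((‖z‖-9/5*r)^2) := (Real.sqrt_sq h95).symm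
            _ < Real.sqrt (s^2 - q) := Real.sqrt_lt_sqrt (by positivity) key
        · have hle : Real.sqrt (s^2 - q) ≤ s := by
            calc Real.sqrt (s^2 - q) ≤ Real.sqrt (s^2) := Real.sqrt_le_sqrt (by linarith)
              _ = s := Real.sqrt_sq hs0.le
          have : s < ‖z‖ + 9/5*r := by
            have := hs.2
            rw [hb] at this
            linarith
          exact lt_of_le_of_lt hle this
      have cov := lintegral_image_eq_lintegral_abs_det_fderiv_mul volume measurableSet_Ioo
        (fun s hs => ((hder s hs).hasFDerivWithinAt)) hinj (fun t => g (S (t, w)))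
      simp only [ContinuousLinearMap.det_toSpanSingleton] at cov
      calc L ≤ ∫⁻ s in Set.Ioo a b,
            ENNReal.ofReal |s / Real.sqrt (s^2-q)| * g (S (h s, w)) := by
            rw [hL]
            apply lintegral_mono_ae
            refine (ae_restrict_iff' measurableSet_Ioo).2 (ae_of_all _ fun s hs => ?_)
            have hs0 : 0 < s := lt_trans hapos hs.1
            have hnormS : ‖S (h s, w)‖ = s := by
              have h1 : ‖S (h s, w)‖^2 = s^2 := by
                rw [hSsq, hhdef]
                simp only
                rw [Real.sq_sqrt (le_of_lt (hspos s hs)), ← hq]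
                ring
              nlinarith [norm_nonneg (S (h s, w))]
            have hne : S (h s, w) ≠ 0 := by
              intro hcon
              rw [hcon] at hnormS
              simp at hnormS
              linarith
            have hval : f (S (h s, w)) = F s := by rw [hrad _ hne, hnormS]
            have hfac : (1:ℝ≥0∞) ≤ ENNReal.ofReal |s / Real.sqrt (s^2-q)| := by
              rw [ENNReal.one_le_ofReal, abs_of_nonneg (by positivity),
                le_div_iff₀ (Real.sqrt_pos.2 (hspos s hs)), one_mul]
              calc Real.sqrt (s^2 - q) ≤ Real.sqrt (s^2) := Real.sqrt_le_sqrt (by linarith)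
                _ = s := Real.sqrt_sq hs0.le
            calc ENNReal.ofReal (F s) = 1 * g (S (h s, w)) := by
                  rw [one_mul, hg]
                  simp only
                  rw [hval]
              _ ≤ _ := mul_le_mul_left hfac _
        _ = ∫⁻ t in h '' Set.Ioo a b, g (S (t, w)) := cov.symm
        _ ≤ ∫⁻ t in I, g (S (t, w)) := lintegral_mono_set himg
    have hvolW : volume W = ENNReal.ofReal ((4/5*r)^n) * volume (ball (0 : Ed n) 1) := by
      have hmp := EuclideanSpace.volume_preserving_symm_measurableEquiv_toLp (Fin n)
      have hpre : ((MeasurableEquiv.toLp 2 (Fin n → ℝ)).symm) ⁻¹' W = ball (0 : Ed n) (4/5*r) := by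
        ext x
        have hxx : ‖x‖^2 = ∑ j, x j ^2 := ed_norm_sq x
        have hco : ∀ j, ((MeasurableEquiv.toLp 2 (Fin n → ℝ)).symm x) j = x j := fun j => rfl
        simp only [Set.mem_preimage, hWdef, Set.mem_setOf_eq, mem_ball, dist_zero_right]
        constructor
        · intro hx
          have hx' : ∑ j, x j ^2 < (4/5*r)^2 := hx
          nlinarith [norm_nonneg x]
        · intro hx
          show ∑ j, ((MeasurableEquiv.toLp 2 (Fin n → ℝ)).symm x) j ^2 < (4/5*r)^2
          have : ∑ j, ((MeasurableEquiv.toLp 2 (Fin n → ℝ)).symm x) j ^2 = ∑ j, x j ^2 :=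
            Finset.sum_congr rfl fun j _ => by rw [hco j]
          rw [this, ← hxx]
          nlinarith [norm_nonneg x]
      rw [← hmp.measure_preimage hWmeas.nullMeasurableSet, hpre,
        ed_ball_vol _ _ (by positivity : (0:ℝ) < 4/5*r)]
    have step3 : L * volume W ≤ ∫⁻ w in W, ∫⁻ t in I, g (S (t, w)) := by
      have hc : ∫⁻ _ in W, L ∂volume = L * volume W := setLIntegral_const W L
      rw [← hc]
      apply lintegral_mono_ae
      exact (ae_restrict_iff' hWmeas).2 (ae_of_all _ fun w hw => hinner w hw)
    calc L * (ENNReal.ofReal ((4/5*r)^n) * volume (ball (0 : Ed n) 1))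
        = L * volume W := by rw [hvolW]
      _ ≤ ∫⁻ w in W, ∫⁻ t in I, g (S (t, w)) := step3
      _ = ∫⁻ p in I ×ˢ W, g (S p) := step2.symm
      _ ≤ K := step1
  -- integrability of f on the doubled ball
  have hInt : IntegrableOn f (ball z (2*r)) volume :=
    (hloc.integrableOn_isCompact (isCompact_closedBall z (2*r))).mono_set ball_subset_closedBall
  have hKne : K ≠ ⊤ := by
    have h1 : K = ∫⁻ y in ball z (2*r), ‖f y‖₊ := by
      rw [hK]
      exact lintegral_congr fun y => by
        rw [hg]; exact (Real.enorm_eq_ofReal (hfpos y)).symm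
    rw [h1]
    exact hInt.2.lt_top.ne
  have havg : ⨍ y in ball z (2*r), f y = ((2*r)^(n+1) * vA)⁻¹ * K.toReal := by
    rw [setAverage_eq, smul_eq_mul]
    have h1 : (volume (ball z (2*r))).toReal = (2*r)^(n+1) * vA := by
      rw [ed_ball_vol _ _ (by positivity), ENNReal.toReal_mul,
        ENNReal.toReal_ofReal (by positivity), hvA]
    have h2 : ∫ y in ball z (2*r), f y = K.toReal := by
      rw [hK]
      exact integral_eq_lintegral_of_nonneg_ae (ae_of_all _ hfpos) hInt.aestronglyMeasurable
    rw [measureReal_def, h1, h2]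
  have hKR : L.toReal * ((4/5*r)^n * vB) ≤ K.toReal := by
    have h1 := ENNReal.toReal_mono hKne hKL
    rwa [ENNReal.toReal_mul, ENNReal.toReal_mul,
      ENNReal.toReal_ofReal (by positivity), ← hvB] at h1
  have h2rr : ‖z‖ + r - (‖z‖ - r) = 2*r := by ring
  rw [h2rr, havg]
  by_cases hFi : IntervalIntegrable F volume a b
  · have hFL : ∫ t in a..b, F t = L.toReal := by
      rw [intervalIntegral.integral_of_le hab.le]
      have hres : volume.restrict (Set.Ioo a b) = volume.restrict (Set.Ioc a b) :=
        Measure.restrict_congr_set Ioo_ae_eq_Ioc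
      have hFnn : 0 ≤ᵐ[volume.restrict (Set.Ioc a b)] F :=
        (ae_restrict_iff' measurableSet_Ioc).2 (ae_of_all _ fun t ht => by
          rw [hFval t (lt_of_lt_of_le hapos ht.1.le)]
          exact hfpos _)
      rw [integral_eq_lintegral_of_nonneg_ae hFnn hFi.1.aestronglyMeasurable, hL, hres]
    rw [hFL]
    have hEq : (5/2)^n * vA / vB * (((2*r)^(n+1) * vA)⁻¹ * (L.toReal * ((4/5*r)^n * vB)))
        = 1/(2*r) * L.toReal := by
      have hrne : r ≠ 0 := ne_of_gt hr
      have h45 : (4/5*r)^n = (4/5)^n * r^n := by rw [mul_pow]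
      have h2rn : (2*r)^(n+1) = 2^(n+1) * r^(n+1) := by rw [mul_pow]
      have h4n : (4:ℝ)^n = 2^(n*2) := by rw [pow_mul, sq, ← mul_pow]; norm_num
      rw [h45, h2rn]
      have h52 : ((4:ℝ)/5)^n * (5/2)^n = 2^n := by rw [← mul_pow]; norm_num
      field_simp
      linear_combination (L.toReal * r * r^n * 2) * h52
    rw [← hEq]
    gcongr
  · rw [intervalIntegral.integral_undef hFi]
    have h1 : (0:ℝ) ≤ K.toReal := ENNReal.toReal_nonneg
    have h2 : (0:ℝ) ≤ ((2*r)^(n+1) * vA)⁻¹ := by positivity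
    have h3 : (0:ℝ) ≤ (5/2)^n * vA / vB := by positivity
    rw [mul_zero]
    exact mul_nonneg h3 (mul_nonneg h2 h1)
end
end
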